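/- arXiv:2411.09866 — 4 statements merged into one kernel-verified Lean document; each statement's English description precedes it below -/
import Mathlib

section
/- Consider problem DP1^(s) and suppose its optimal value is strictly positive. If (P*_1,…,P*_M) is an optimal solution of DP1^(s), then every channel state that receives positive power has strictly positive rate; that is, for every m ∈ {1,…,M}, P*_m > 0 implies R_{h_m}(P*_m) > 0. -/
open scoped BigOperators Classical
open Finset

noncomputable section

/-- Euclidean inner product on `Fin L → ℝ`. -/
def ip {L : ℕ} (x y : Fin L → ℝ) : ℝ := ∑ i, x i * y i

/-- Squared Euclidean norm on `Fin L → ℝ`. -/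
def nsq {L : ℕ} (x : Fin L → ℝ) : ℝ := ∑ i, (x i) ^ 2

/-- ε(h) = ‖h‖²‖a‖² − ⟨h,a⟩². -/
def eps {L : ℕ} (a h : Fin L → ℝ) : ℝ := nsq h * nsq a - (ip h a) ^ 2

/-- Symmetric-policy computation rate R_h(P). -/
def Rsym {L : ℕ} (a h : Fin L → ℝ) (P : ℝ) : ℝ :=
  (1 / 2) * Real.logb 2 ((1 + P * nsq h) / (nsq a + P * eps a h))

/-- The vector √p∘h with entries √(p_l)·h_l. -/
def sqp {L : ℕ} (p h : Fin L → ℝ) : Fin L → ℝ := fun l => Real.sqrt (p l) * h l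

/-- Asymmetric-policy computation rate R(h,p). -/
def Rasym {L : ℕ} (a h p : Fin L → ℝ) : ℝ :=
  (1 / 2) * Real.logb 2 ((1 + nsq (sqp p h)) /
    (nsq a + (nsq (sqp p h) * nsq a - (ip (sqp p h) a) ^ 2)))

/-- The KKT water-filling-type solution P^KKT_h(λ). -/
def PKKT {L : ℕ} (a h : Fin L → ℝ) (lam : ℝ) : ℝ :=
  if ∃ t : ℝ, h = t • a then 1 / lam - 1 / nsq h
  else (-(2 * nsq h * nsq a - (ip h a) ^ 2) +
      Real.sqrt ((2 * nsq h * nsq a - (ip h a) ^ 2) ^ 2 -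
        4 * (nsq h * eps a h) * (nsq a - (ip h a) ^ 2 / lam))) /
    (2 * (nsq h * eps a h))


lemma nsq_pos {L : ℕ} {x : Fin L → ℝ} (hx : x ≠ 0) : 0 < nsq x := by
  obtain ⟨i, hi⟩ : ∃ i, x i ≠ 0 := by
    by_contra hc; push_neg at hc; exact hx (funext hc)
  exact Finset.sum_pos' (fun j _ => sq_nonneg _) ⟨i, Finset.mem_univ i, by positivity⟩

lemma eps_nonneg {L : ℕ} (a h : Fin L → ℝ) : 0 ≤ eps a h :=
  sub_nonneg.2 (Finset.sum_mul_sq_le_sq_mul_sq Finset.univ h a)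

lemma one_le_nsq_int {L : ℕ} {a : Fin L → ℝ} (ha : a ≠ 0)
    (haint : ∀ i, ∃ n : ℤ, a i = (n : ℝ)) : 1 ≤ nsq a := by
  obtain ⟨i, hi⟩ : ∃ i, a i ≠ 0 := by
    by_contra hc; push_neg at hc; exact ha (funext hc)
  obtain ⟨n, hn⟩ := haint i
  have hn0 : n ≠ 0 := by rintro rfl; simp [hn] at hi
  have h2 : (0:ℤ) < n ^ 2 := by positivity
  have h3 : (1:ℤ) ≤ n ^ 2 := Int.add_one_le_iff.mpr h2
  have h1 : (1 : ℝ) ≤ (a i) ^ 2 := by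
    rw [hn]; exact_mod_cast (by exact_mod_cast h3 : (1:ℝ) ≤ ((n^2 : ℤ) : ℝ))
  calc (1:ℝ) ≤ (a i)^2 := h1
    _ ≤ nsq a := Finset.single_le_sum (f := fun j => (a j)^2)
        (fun j _ => sq_nonneg _) (Finset.mem_univ i)

lemma Rsym_zero_nonpos {L : ℕ} {a : Fin L → ℝ} (h : Fin L → ℝ)
    (hA1 : 1 ≤ nsq a) : Rsym a h 0 ≤ 0 := by
  have h0 : 0 < nsq a := lt_of_lt_of_le one_pos hA1
  have heq : Rsym a h 0 = (1/2) * Real.logb 2 (1 / nsq a) := by simp [Rsym]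
  rw [heq]
  have : Real.logb 2 (1 / nsq a) ≤ 0 :=
    Real.logb_nonpos one_lt_two (by positivity) (by rw [div_le_one h0]; exact hA1)
  linarith

lemma Rsym_strictMono {L : ℕ} {a hv : Fin L → ℝ} (ha : a ≠ 0) (hhv : hv ≠ 0)
    (hA1 : 1 ≤ nsq a)
    {P P' : ℝ} (hP : 0 ≤ P) (hPP : P < P') (hpos : 0 < Rsym a hv P) :
    Rsym a hv P < Rsym a hv P' := by
  set H := nsq hv with hH
  set A := nsq a with hA
  set E := eps a hv with hE
  have hApos : 0 < A := nsq_pos ha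
  have hHpos : 0 < H := nsq_pos hhv
  have hEnn : 0 ≤ E := eps_nonneg a hv
  have hP' : 0 ≤ P' := le_of_lt (lt_of_le_of_lt hP hPP)
  have hd1 : 0 < A + P * E := by positivity
  have hd2 : 0 < A + P' * E := by positivity
  have hn1 : 0 < 1 + P * H := by positivity
  have hratio : 1 < (1 + P * H) / (A + P * E) := by
    by_contra hc
    push_neg at hc
    have hlog : Real.logb 2 ((1 + P * H) / (A + P * E)) ≤ 0 :=
      Real.logb_nonpos one_lt_two (by positivity) hc
    have : Rsym a hv P ≤ 0 := by rw [Rsym]; linarith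
    linarith
  have hsq : H * A - E = (ip hv a) ^ 2 := by rw [hE, eps]; ring
  have hc2 : 0 < H * A - E := by
    rw [hsq]
    rcases eq_or_lt_of_le (sq_nonneg (ip hv a)) with h0|h0
    · exfalso
      have hEeq : E = H * A := by linarith [hsq, h0.symm ▸ hsq]
      have hrr : (1 + P*H)/(A + P*E) = 1/A := by
        rw [hEeq, div_eq_div_iff (by positivity) (ne_of_gt hApos)]
        ring
      rw [hrr] at hratio
      have : 1/A ≤ 1 := by rw [div_le_one hApos]; exact hA1
      linarith
    · exact h0
  have hkey : (1 + P * H) / (A + P * E) < (1 + P' * H) / (A + P' * E) := by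
    rw [div_lt_div_iff₀ hd1 hd2]
    nlinarith [mul_pos hc2 (sub_pos.2 hPP)]
  have := Real.logb_lt_logb one_lt_two (by positivity) hkey
  rw [Rsym, Rsym]; linarith

/-- at a positive-value optimum of DP1^(s), every channel state with
positive power has strictly positive rate. -/
theorem stmt0 {L M : ℕ} (hL : 1 ≤ L)
    (a : Fin L → ℝ) (ha : a ≠ 0) (haint : ∀ i, ∃ n : ℤ, a i = (n : ℝ))
    (h : Fin M → Fin L → ℝ) (hh : ∀ m, h m ≠ 0)
    (f : Fin M → ℝ) (hf : ∀ m, 0 < f m) (hfsum : ∑ m, f m = 1)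
    (Pbar : ℝ) (hPbar : 0 < Pbar)
    (Pstar : Fin M → ℝ)
    (hfeas : (∀ m, 0 ≤ Pstar m) ∧ ∑ m, f m * Pstar m ≤ Pbar)
    (hopt : ∀ Q : Fin M → ℝ, (∀ m, 0 ≤ Q m) → ∑ m, f m * Q m ≤ Pbar →
      ∑ m, f m * max 0 (Rsym a (h m) (Q m)) ≤ ∑ m, f m * max 0 (Rsym a (h m) (Pstar m)))
    (hpos : 0 < ∑ m, f m * max 0 (Rsym a (h m) (Pstar m))) :
    ∀ m, 0 < Pstar m → 0 < Rsym a (h m) (Pstar m) := by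
  intro m hPm
  by_contra hc
  push_neg at hc
  have hA1 : 1 ≤ nsq a := one_le_nsq_int ha haint
  obtain ⟨hPnn, hPsum⟩ := hfeas
  obtain ⟨m', hm'⟩ : ∃ m', 0 < Rsym a (h m') (Pstar m') := by
    by_contra hno; push_neg at hno
    have hle : ∑ k, f k * max 0 (Rsym a (h k) (Pstar k)) ≤ 0 := by
      apply Finset.sum_nonpos; intro k _
      rw [max_eq_left (hno k), mul_zero]
    linarith
  have hmm' : m ≠ m' := by rintro rfl; linarith
  set δ := (f m / f m') * Pstar m with hδ
  have hδpos : 0 < δ := by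
    have := hf m; have := hf m'
    exact mul_pos (div_pos ‹0 < f m› ‹0 < f m'›) hPm
  set Q : Fin M → ℝ := fun k =>
    if k = m then 0 else if k = m' then Pstar m' + δ else Pstar k with hQ
  have hQnn : ∀ k, 0 ≤ Q k := by
    intro k
    simp only [hQ]
    split_ifs
    · exact le_refl 0
    · linarith [hPnn m']
    · exact hPnn k
  have hQsum : ∑ k, f k * Q k = ∑ k, f k * Pstar k := by
    have hpt : ∀ k, f k * Q k = f k * Pstar k +
        ((if k = m then -(f m * Pstar m) else 0) +
         (if k = m' then f m * Pstar m else 0)) := by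
      intro k
      by_cases h1 : k = m
      · have h2 : k ≠ m' := by rw [h1]; exact hmm'
        simp only [hQ, if_pos h1, if_neg h2]
        rw [h1]
        ring
      · by_cases h2 : k = m'
        · simp only [hQ, if_neg h1, if_pos h2]
          have hfm' : f m' ≠ 0 := ne_of_gt (hf m')
          rw [h2, hδ]
          field_simp
          ring
        · simp only [hQ, if_neg h1, if_neg h2]
          ring
    rw [Finset.sum_congr rfl (fun k _ => hpt k)]
    rw [Finset.sum_add_distrib, Finset.sum_add_distrib,
      Finset.sum_ite_eq' Finset.univ m, Finset.sum_ite_eq' Finset.univ m']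
    simp
  set Rnew := Rsym a (h m') (Pstar m' + δ) with hRnew
  have hmono : Rsym a (h m') (Pstar m') < Rnew :=
    Rsym_strictMono ha (hh m') hA1 (hPnn m') (by linarith) hm'
  have hobj : ∑ k, f k * max 0 (Rsym a (h k) (Q k)) =
      ∑ k, f k * max 0 (Rsym a (h k) (Pstar k)) +
        f m' * (Rnew - Rsym a (h m') (Pstar m')) := by
    have hpt : ∀ k, f k * max 0 (Rsym a (h k) (Q k)) =
        f k * max 0 (Rsym a (h k) (Pstar k)) +
        (if k = m' then f m' * (Rnew - Rsym a (h m') (Pstar m')) else 0) := by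
      intro k
      by_cases h1 : k = m
      · have h2 : k ≠ m' := by rw [h1]; exact hmm'
        simp only [hQ, if_pos h1, if_neg h2]
        rw [h1, max_eq_left hc, max_eq_left (Rsym_zero_nonpos (h m) hA1)]
        ring
      · by_cases h2 : k = m'
        · simp only [hQ, if_neg h1, if_pos h2]
          rw [h2, max_eq_right (le_of_lt hm'), max_eq_right (le_of_lt (lt_trans hm' hmono))]
          ring
        · simp only [hQ, if_neg h1, if_neg h2]
          ring
    rw [Finset.sum_congr rfl (fun k _ => hpt k), Finset.sum_add_distrib,
      Finset.sum_ite_eq' Finset.univ m']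
    simp
  have hQbudget : ∑ k, f k * Q k ≤ Pbar := by rw [hQsum]; exact hPsum
  have := hopt Q hQnn hQbudget
  rw [hobj] at this
  have hgain : 0 < f m' * (Rnew - Rsym a (h m') (Pstar m')) :=
    mul_pos (hf m') (by linarith)
  linarith
end
end

section
/- If h ∈ ℝ^L satisfies ⟨h,a⟩ ≠ 0, then the function P ↦ R_h(P) is strictly concave on [0,∞): for all 0 ≤ x < y and all t ∈ (0,1), R_h(t·x + (1−t)·y) > t·R_h(x) + (1−t)·R_h(y). -/
open scoped BigOperators Classical
open Finset

noncomputable section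

/-- if ⟨h,a⟩ ≠ 0, then P ↦ R_h(P) is strictly concave on [0,∞). -/
theorem stmt8 {L : ℕ} (hL : 1 ≤ L)
    (a : Fin L → ℝ) (ha : a ≠ 0) (haint : ∀ i, ∃ n : ℤ, a i = (n : ℝ))
    (h : Fin L → ℝ) (hha : ip h a ≠ 0) :
    ∀ x y t : ℝ, 0 ≤ x → x < y → 0 < t → t < 1 →
      t * Rsym a h x + (1 - t) * Rsym a h y < Rsym a h (t * x + (1 - t) * y) := by
  set A := nsq h with hA
  set B := nsq a with hB
  set E := eps a h with hE
  -- basic positivity facts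
  have hhne : h ≠ 0 := by
    intro h0; apply hha; simp [ip, h0]
  have hApos : 0 < A := by
    rw [hA, nsq]
    have hnn : ∀ i ∈ Finset.univ, (0:ℝ) ≤ (h i)^2 := fun i _ => sq_nonneg _
    rcases Function.ne_iff.1 hhne with ⟨i, hi⟩
    exact Finset.sum_pos' hnn ⟨i, Finset.mem_univ i,
      lt_of_le_of_ne (sq_nonneg _) (Ne.symm (pow_ne_zero 2 hi))⟩
  have hBpos : 0 < B := by
    rw [hB, nsq]
    have hnn : ∀ i ∈ Finset.univ, (0:ℝ) ≤ (a i)^2 := fun i _ => sq_nonneg _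
    rcases Function.ne_iff.1 ha with ⟨i, hi⟩
    exact Finset.sum_pos' hnn ⟨i, Finset.mem_univ i,
      lt_of_le_of_ne (sq_nonneg _) (Ne.symm (pow_ne_zero 2 hi))⟩
  have hEnn : 0 ≤ E := by
    rw [hE, eps, ip, nsq, nsq]
    have := Finset.sum_mul_sq_le_sq_mul_sq Finset.univ h a
    nlinarith [this]
  have hD : 0 < A * B - E := by
    rw [hE, eps]
    have : 0 < (ip h a) ^ 2 := lt_of_le_of_ne (sq_nonneg _) (Ne.symm (pow_ne_zero 2 hha))
    nlinarith
  -- the function g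
  set g : ℝ → ℝ := fun P => Real.log (1 + P * A) - Real.log (B + P * E) with hg
  have hnum : ∀ P : ℝ, 0 ≤ P → 0 < 1 + P * A := by
    intro P hP; nlinarith
  have hden : ∀ P : ℝ, 0 ≤ P → 0 < B + P * E := by
    intro P hP; nlinarith
  -- Rsym rewrites as c * g on [0,∞)
  have hRg : ∀ P : ℝ, 0 ≤ P → Rsym a h P = (1 / (2 * Real.log 2)) * g P := by
    intro P hP
    have hl2 : (0:ℝ) < Real.log 2 := Real.log_pos (by norm_num)
    rw [Rsym, Real.logb, Real.log_div (hnum P hP).ne' (hden P hP).ne', hg]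
    field_simp
  -- derivative of g
  have hderiv : ∀ P : ℝ, 0 < P →
      deriv g P = A / (1 + P * A) - E / (B + P * E) := by
    intro P hP
    have h1 : HasDerivAt (fun P : ℝ => 1 + P * A) A P := by
      simpa using ((hasDerivAt_id P).mul_const A).const_add 1
    have h2 : HasDerivAt (fun P : ℝ => B + P * E) E P := by
      simpa using ((hasDerivAt_id P).mul_const E).const_add B
    have h1' := h1.log (hnum P hP.le).ne'
    have h2' := h2.log (hden P hP.le).ne'
    exact (h1'.sub h2').deriv
  -- g is strictly concave on [0,∞)
  have hconc : StrictConcaveOn ℝ (Set.Ici (0:ℝ)) g := by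
    apply StrictAntiOn.strictConcaveOn_of_deriv (convex_Ici 0)
    · apply ContinuousOn.sub
      · apply ContinuousOn.log
        · fun_prop
        · intro P hP; exact (hnum P hP).ne'
      · apply ContinuousOn.log
        · fun_prop
        · intro P hP; exact (hden P hP).ne'
    · rw [interior_Ici]
      intro x hx y hy hxy
      rw [hderiv x hx, hderiv y hy]
      have hx' : (0:ℝ) < x := hx
      have hy' : (0:ℝ) < y := hy
      have hnx := hnum x hx'.le
      have hny := hnum y hy'.le
      have hdx := hden x hx'.le
      have hdy := hden y hy'.le
      rw [div_sub_div _ _ hnx.ne' hdx.ne', div_sub_div _ _ hny.ne' hdy.ne']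
      have hex : A * (B + x * E) - (1 + x * A) * E = A * B - E := by ring
      have hey : A * (B + y * E) - (1 + y * A) * E = A * B - E := by ring
      rw [hex, hey]
      apply div_lt_div_of_pos_left hD (by positivity)
      nlinarith [mul_pos (sub_pos.2 hxy) (mul_pos hApos hBpos),
        mul_nonneg (sub_nonneg.2 hxy.le) hEnn,
        mul_nonneg (mul_nonneg hEnn hApos.le)
          (mul_nonneg (add_nonneg hx'.le hy'.le) (sub_nonneg.2 hxy.le))]
  -- conclude
  intro x y t hx hxy ht ht1
  have hy : (0:ℝ) ≤ y := hx.trans hxy.le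
  have hm : (0:ℝ) ≤ t * x + (1 - t) * y := by nlinarith
  rw [hRg x hx, hRg y hy, hRg _ hm]
  have hkey := hconc.2 (Set.mem_Ici.2 hx) (Set.mem_Ici.2 hy) (ne_of_lt hxy) ht
    (show (0:ℝ) < 1 - t by linarith) (by ring)
  simp only [smul_eq_mul] at hkey
  have hcpos : 0 < 1 / (2 * Real.log 2) := by
    have := Real.log_pos (by norm_num : (1:ℝ) < 2); positivity
  calc t * (1 / (2 * Real.log 2) * g x) + (1 - t) * (1 / (2 * Real.log 2) * g y)
      = (1 / (2 * Real.log 2)) * (t * g x + (1 - t) * g y) := by ring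
    _ < (1 / (2 * Real.log 2)) * g (t * x + (1 - t) * y) :=
        mul_lt_mul_of_pos_left hkey hcpos
end
end

section
/- Let h ∈ ℝ^L and let p ∈ ℝ^L be an entrywise-nonnegative power vector with ⟨√p∘h, a⟩ ≠ 0. Then for every α > 1, scaling the power vector strictly increases the computation rate: R(h, α·p) > R(h, p). -/
open scoped BigOperators Classical
open Finset

noncomputable section

/-- scaling a nonnegative power vector with ⟨√p∘h,a⟩ ≠ 0 by α > 1 strictly
increases the computation rate. -/
theorem stmt10 {L : ℕ} (hL : 1 ≤ L)
    (a : Fin L → ℝ) (ha : a ≠ 0) (haint : ∀ i, ∃ n : ℤ, a i = (n : ℝ))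
    (h : Fin L → ℝ) (p : Fin L → ℝ) (hp : ∀ l, 0 ≤ p l)
    (hip : ip (sqp p h) a ≠ 0) :
    ∀ α : ℝ, 1 < α → Rasym a h p < Rasym a h (fun l => α * p l) := by
  intro α hα
  have hα0 : (0:ℝ) ≤ α := by linarith
  set g := sqp p h with hg
  have hsq : sqp (fun l => α * p l) h = fun l => Real.sqrt α * g l := by
    funext l
    simp only [sqp, hg, Real.sqrt_mul hα0]
    ring
  have hN : nsq (sqp (fun l => α * p l) h) = α * nsq g := by
    rw [hsq]
    simp only [nsq, Finset.mul_sum]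
    refine Finset.sum_congr rfl fun i _ => ?_
    rw [mul_pow, Real.sq_sqrt hα0]
  have hIα : ip (sqp (fun l => α * p l) h) a = Real.sqrt α * ip g a := by
    rw [hsq]
    simp only [ip, Finset.mul_sum, mul_assoc]
  set N := nsq g with hNdef
  set A := nsq a with hAdef
  set I := ip g a with hIdef
  have hNnn : 0 ≤ N := Finset.sum_nonneg fun i _ => sq_nonneg _
  have hApos : 0 < A := by
    obtain ⟨i, hi⟩ := Function.ne_iff.mp ha
    exact Finset.sum_pos' (fun j _ => sq_nonneg _)
      ⟨i, Finset.mem_univ i, pow_pos (abs_pos.mpr hi) 2 |>.trans_le (by rw [sq_abs])⟩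
  have hCS : I ^ 2 ≤ N * A := by
    simpa [hNdef, hAdef, hIdef, nsq, ip] using
      Finset.sum_mul_sq_le_sq_mul_sq Finset.univ g a
  have hI2 : 0 < I ^ 2 := by positivity
  unfold Rasym
  rw [hN, hIα]
  have hIα2 : (Real.sqrt α * I) ^ 2 = α * I ^ 2 := by
    rw [mul_pow, Real.sq_sqrt hα0]
  rw [hIα2]
  apply mul_lt_mul_of_pos_left _ (by norm_num : (0:ℝ) < 1/2)
  have hd1 : 0 < A + (N * A - I ^ 2) := by nlinarith
  have hd2 : 0 < A + (α * N * A - α * I ^ 2) := by nlinarith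
  apply Real.logb_lt_logb (by norm_num)
  · positivity
  · rw [div_lt_div_iff₀ hd1 hd2]
    nlinarith
end
end

section
/- For every nonzero h ∈ ℝ^L with ⟨h,a⟩ ≠ 0, the function λ ↦ P^KKT_h(λ) is strictly decreasing on (0,∞): if 0 < λ₁ < λ₂ then P^KKT_h(λ₁) > P^KKT_h(λ₂). -/
/-!
In the collinear case `P = 1/λ - 1/‖h‖²`. Otherwise `b² - 4 d ‖a‖² = ⟨h,a⟩⁴`, so the
discriminant is `b² - 4 d c(λ) = ⟨h,a⟩⁴ + 4 d ⟨h,a⟩² / λ`. Since `d > 0` (strict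
Cauchy–Schwarz for non-collinear vectors) and `⟨h,a⟩ ≠ 0`, this discriminant, hence its square
root and `P`, strictly decreases in `λ`.
-/

open scoped BigOperators Classical
open Finset

noncomputable section

lemma nsq_nonneg {L : ℕ} (x : Fin L → ℝ) : 0 ≤ nsq x :=
  sum_nonneg fun _ _ => sq_nonneg _

lemma nsq_eq_zero_iff {L : ℕ} {x : Fin L → ℝ} : nsq x = 0 ↔ x = 0 := by
  simp only [nsq, sum_eq_zero_iff_of_nonneg fun i _ => sq_nonneg (x i), mem_univ,
    true_implies, pow_eq_zero_iff two_ne_zero, funext_iff, Pi.zero_apply]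

lemma nsq_smul_sub_smul {L : ℕ} (a h : Fin L → ℝ) (c d : ℝ) :
    nsq (c • h - d • a) = c ^ 2 * nsq h - 2 * c * d * ip h a + d ^ 2 * nsq a := by
  simp only [nsq, ip, Pi.sub_apply, Pi.smul_apply, smul_eq_mul, mul_sum,
    ← sum_sub_distrib, ← sum_add_distrib]
  exact sum_congr rfl fun i _ => by ring

lemma nsq_projection_residual {L : ℕ} (a h : Fin L → ℝ) :
    nsq (nsq a • h - ip h a • a) = nsq a * eps a h := by
  rw [nsq_smul_sub_smul, eps]
  ring

lemma eps_pos_of_not_collinear {L : ℕ} {a h : Fin L → ℝ} (ha : a ≠ 0)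
    (hc : ¬ ∃ t : ℝ, h = t • a) : 0 < eps a h := by
  have ha2 : 0 < nsq a := nsq_pos ha
  refine pos_of_mul_pos_right ?_ ha2.le
  rw [← nsq_projection_residual]
  refine nsq_pos fun hres => hc ⟨ip h a / nsq a, ?_⟩
  rw [sub_eq_zero] at hres
  rw [div_eq_inv_mul, mul_smul, ← hres, inv_smul_smul₀ ha2.ne']

lemma PKKT_of_collinear {L : ℕ} {a h : Fin L → ℝ} (hc : ∃ t : ℝ, h = t • a) (lam : ℝ) :
    PKKT a h lam = 1 / lam - 1 / nsq h :=
  if_pos hc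

lemma PKKT_of_not_collinear {L : ℕ} {a h : Fin L → ℝ} (hc : ¬ ∃ t : ℝ, h = t • a)
    (lam : ℝ) :
    PKKT a h lam = (-(2 * nsq h * nsq a - ip h a ^ 2) +
      √(ip h a ^ 2 * ip h a ^ 2 + 4 * (nsq h * eps a h) * ip h a ^ 2 / lam)) /
        (2 * (nsq h * eps a h)) := by
  rw [PKKT, if_neg hc, eps]
  ring_nf

theorem strictAntiOn_PKKT {L : ℕ} {a h : Fin L → ℝ} (hha : ip h a ≠ 0) :
    StrictAntiOn (PKKT a h) (Set.Ioi 0) := by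
  intro lam₁ hlam₁ lam₂ hlam₂ hlt
  rw [Set.mem_Ioi] at hlam₁ hlam₂
  by_cases hc : ∃ t : ℝ, h = t • a
  · simp only [PKKT_of_collinear hc]
    linarith [one_div_lt_one_div_of_lt hlam₁ hlt]
  · have ha : a ≠ 0 := by
      rintro rfl
      simp [ip] at hha
    have hh : h ≠ 0 := by
      rintro rfl
      exact hc ⟨0, (zero_smul ℝ a).symm⟩
    have hd : 0 < nsq h * eps a h := mul_pos (nsq_pos hh) (eps_pos_of_not_collinear ha hc)
    have hs : 0 < ip h a ^ 2 := by positivity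
    have hdisc : 4 * (nsq h * eps a h) * ip h a ^ 2 / lam₂
        < 4 * (nsq h * eps a h) * ip h a ^ 2 / lam₁ :=
      div_lt_div_of_pos_left (by positivity) hlam₁ hlt
    have hsqrt : √(ip h a ^ 2 * ip h a ^ 2 + 4 * (nsq h * eps a h) * ip h a ^ 2 / lam₂)
        < √(ip h a ^ 2 * ip h a ^ 2 + 4 * (nsq h * eps a h) * ip h a ^ 2 / lam₁) :=
      Real.sqrt_lt_sqrt (by positivity) (by linarith)
    rw [PKKT_of_not_collinear hc, PKKT_of_not_collinear hc]
    exact div_lt_div_of_pos_right (by linarith) (by positivity)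

theorem stmt11_general {L : ℕ}
    (a : Fin L → ℝ)
    (h : Fin L → ℝ) (hha : ip h a ≠ 0) :
    ∀ lam₁ lam₂ : ℝ, 0 < lam₁ → lam₁ < lam₂ → PKKT a h lam₂ < PKKT a h lam₁ :=
  fun _ _ hlam₁ hlt => strictAntiOn_PKKT hha hlam₁ (hlam₁.trans hlt) hlt

/-- for nonzero h with ⟨h,a⟩ ≠ 0, λ ↦ P^KKT_h(λ) is strictly decreasing
on (0,∞). -/
theorem stmt11 {L : ℕ} (hL : 1 ≤ L)
    (a : Fin L → ℝ) (ha : a ≠ 0) (haint : ∀ i, ∃ n : ℤ, a i = (n : ℝ))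
    (h : Fin L → ℝ) (hh : h ≠ 0) (hha : ip h a ≠ 0) :
    ∀ lam₁ lam₂ : ℝ, 0 < lam₁ → lam₁ < lam₂ → PKKT a h lam₂ < PKKT a h lam₁ :=
  stmt11_general a h hha
end
end
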